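/- arXiv:1405.3951 — 4 statements merged into one kernel-verified Lean document; each statement's English description precedes it below -/
import Mathlib

section
/- Let V : Fin M → ℝ be injective (a non-degenerate potential), let κ > 0, and let H = -|φ₀⟩⟨φ₀| + κV where φ₀ is the normalized constant vector (1,...,1)/√M and V acts diagonally. Then a real number E with E ∉ {κ V(x) : x} is an eigenvalue of H if and only if (1/M) ∑_{x} 1/(κ V(x) - E) = 1, and in that case the vector ψ_E(x) = 1/(κ V(x) - E) is a corresponding eigenvector. -/
/-!
Write `H = D - u vᵀ` with `D` diagonal. The eigenvalue equation `H ψ = E ψ` says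
`(D - E) ψ = (v ⬝ ψ) u`, so for `E` off the spectrum of `D` every eigenvector is a multiple of the
resolvent vector `(D - E)⁻¹ u`, and that vector is an eigenvector exactly when
`v ⬝ (D - E)⁻¹ u = 1`. For `u = v = φ₀` this is `(1/M) ∑ₓ 1/(κ V(x) - E) = 1`.
-/

open Matrix BigOperators

namespace Matrix

variable {ι K : Type*} [Fintype ι] [DecidableEq ι] [Field K] (d u v : ι → K) (E : K)

theorem diagonal_sub_vecMulVec_mulVec_eq_smul_iff (ψ : ι → K) :
    (diagonal d - vecMulVec u v) *ᵥ ψ = E • ψ ↔ ∀ x, (d x - E) * ψ x = u x * (v ⬝ᵥ ψ) := by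
  simp only [funext_iff, sub_mulVec, vecMulVec_mulVec, Pi.sub_apply, mulVec_diagonal,
    Pi.smul_apply, MulOpposite.smul_eq_mul_unop, MulOpposite.unop_op, smul_eq_mul]
  refine forall_congr' fun x => ⟨fun h => ?_, fun h => ?_⟩ <;> linear_combination h

variable {d E}

theorem diagonal_sub_vecMulVec_mulVec_resolvent (hE : ∀ x, d x ≠ E)
    (hsec : ∑ x, v x * u x / (d x - E) = 1) :
    (diagonal d - vecMulVec u v) *ᵥ (fun x => u x / (d x - E)) =
      E • fun x => u x / (d x - E) := by
  have hdot : v ⬝ᵥ (fun x => u x / (d x - E)) = 1 := by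
    simpa only [dotProduct, mul_div_assoc] using hsec
  rw [diagonal_sub_vecMulVec_mulVec_eq_smul_iff, hdot]
  intro x
  rw [mul_one, mul_div_cancel₀ _ (sub_ne_zero.mpr (hE x))]

theorem exists_eigenvector_diagonal_sub_vecMulVec_iff (hE : ∀ x, d x ≠ E) :
    (∃ ψ : ι → K, ψ ≠ 0 ∧ (diagonal d - vecMulVec u v) *ᵥ ψ = E • ψ) ↔
      ∑ x, v x * u x / (d x - E) = 1 := by
  constructor
  · rintro ⟨ψ, hψ0, hψ⟩
    rw [diagonal_sub_vecMulVec_mulVec_eq_smul_iff] at hψ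
    set c := v ⬝ᵥ ψ
    have hψ_eq : ∀ x, ψ x = c * (u x / (d x - E)) := fun x => by
      rw [eq_comm, mul_div_assoc', mul_comm c, ← hψ x,
        mul_div_cancel_left₀ _ (sub_ne_zero.mpr (hE x))]
    have hc : c ≠ 0 := fun hc => hψ0 (funext fun x => by simp [hψ_eq x, hc])
    have hc_eq : c * ∑ x, v x * u x / (d x - E) = c * 1 := calc
      _ = ∑ x, v x * ψ x := by
        rw [Finset.mul_sum]; exact Finset.sum_congr rfl fun x _ => by rw [hψ_eq x]; ring
      _ = c * 1 := (mul_one c).symm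
    exact mul_left_cancel₀ hc hc_eq
  · intro hsec
    refine ⟨fun x => u x / (d x - E), fun h0 => ?_,
      diagonal_sub_vecMulVec_mulVec_resolvent u v hE hsec⟩
    simp only [funext_iff, Pi.zero_apply] at h0
    simp [mul_div_assoc, h0] at hsec

end Matrix

theorem stmt_0_general (M : ℕ) (V : Fin M → ℝ)
    (κ : ℝ)
    (φ₀ : Fin M → ℝ) (hφ₀ : ∀ x, φ₀ x = (Real.sqrt M)⁻¹)
    (H : Matrix (Fin M) (Fin M) ℝ)
    (hH : H = -(Matrix.vecMulVec φ₀ φ₀) + κ • Matrix.diagonal V)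
    (E : ℝ) (hE : ∀ x, E ≠ κ * V x) :
    ((∃ ψ : Fin M → ℝ, ψ ≠ 0 ∧ H *ᵥ ψ = E • ψ) ↔
      (1 / (M : ℝ)) * ∑ x, (κ * V x - E)⁻¹ = 1) ∧
    ((1 / (M : ℝ)) * ∑ x, (κ * V x - E)⁻¹ = 1 →
      H *ᵥ (fun x => (κ * V x - E)⁻¹) = E • (fun x => (κ * V x - E)⁻¹)) := by
  have hH' : H = diagonal (κ • V) - vecMulVec φ₀ φ₀ := by rw [hH, diagonal_smul, neg_add_eq_sub]
  have hE' : ∀ x, (κ • V) x ≠ E := fun x => (hE x).symm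
  have hsec : ∑ x, φ₀ x * φ₀ x / ((κ • V) x - E) = 1 / M * ∑ x, (κ * V x - E)⁻¹ := by
    simp only [hφ₀, ← mul_inv, Real.mul_self_sqrt M.cast_nonneg, Finset.mul_sum, Pi.smul_apply,
      smul_eq_mul, div_eq_mul_inv, one_mul]
  refine ⟨by rw [hH', exists_eigenvector_diagonal_sub_vecMulVec_iff _ _ hE', hsec], fun h => ?_⟩
  have hψ : (fun x => (κ * V x - E)⁻¹) = √M • fun x => φ₀ x / ((κ • V) x - E) := by
    funext x
    have hM : √(M : ℝ) ≠ 0 := Real.sqrt_ne_zero'.mpr (Nat.cast_pos.mpr x.pos)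
    simp only [Pi.smul_apply, smul_eq_mul, hφ₀, ← mul_div_assoc, mul_inv_cancel₀ hM, one_div]
  rw [hH', hψ, mulVec_smul, diagonal_sub_vecMulVec_mulVec_resolvent _ _ hE' (hsec.trans h),
    smul_comm]

theorem stmt_0 (M : ℕ) (hM : 1 ≤ M) (V : Fin M → ℝ) (hV : Function.Injective V)
    (κ : ℝ) (hκ : 0 < κ)
    (φ₀ : Fin M → ℝ) (hφ₀ : ∀ x, φ₀ x = (Real.sqrt M)⁻¹)
    (H : Matrix (Fin M) (Fin M) ℝ)
    (hH : H = -(Matrix.vecMulVec φ₀ φ₀) + κ • Matrix.diagonal V)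
    (E : ℝ) (hE : ∀ x, E ≠ κ * V x) :
    ((∃ ψ : Fin M → ℝ, ψ ≠ 0 ∧ H *ᵥ ψ = E • ψ) ↔
      (1 / (M : ℝ)) * ∑ x, (κ * V x - E)⁻¹ = 1) ∧
    ((1 / (M : ℝ)) * ∑ x, (κ * V x - E)⁻¹ = 1 →
      H *ᵥ (fun x => (κ * V x - E)⁻¹) = E • (fun x => (κ * V x - E)⁻¹)) :=
  stmt_0_general M V κ φ₀ hφ₀ H hH E hE
end

section
/- Let H = -|φ₀⟩⟨φ₀| + κV be as above with V non-degenerate. Then for every z ∈ ℂ with Im z ≠ 0, ⟨φ₀, (H - z)⁻¹ φ₀⟩ = (F(z)⁻¹ - 1)⁻¹, where F(z) = (1/M) ∑_x 1/(κ V(x) - z). -/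
/-!
Write `H - z = D - φ₀ φ₀*` with `D = diag (κV - z)`, invertible because `Im z ≠ 0`.
For a rank-one perturbation of an invertible matrix, `(D - u v*) ψ = u` is solved by
`ψ = (1 - F)⁻¹ D⁻¹ u` with `F = v* D⁻¹ u`, so `v* (D - u v*)⁻¹ u = F / (1 - F) = (F⁻¹ - 1)⁻¹`.
Here `F` is exactly the mean `F(z)` of the `(κV(x) - z)⁻¹`, and `Im F` has the sign of `Im z`,
which rules out `F = 0` and `F = 1`.
-/

open Matrix BigOperators

namespace Matrix

variable {n K : Type*} [Fintype n] [DecidableEq n] [Field K]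

theorem inv_diagonal_of_ne_zero {d : n → K} (hd : ∀ i, d i ≠ 0) :
    (diagonal d)⁻¹ = diagonal d⁻¹ :=
  inv_eq_left_inv <| by
    rw [diagonal_mul_diagonal, ← diagonal_one]
    exact congrArg diagonal (funext fun i => inv_mul_cancel₀ (hd i))

theorem dotProduct_inv_diagonal_mulVec {d : n → K} (hd : ∀ i, d i ≠ 0) (u v : n → K) :
    v ⬝ᵥ (diagonal d)⁻¹ *ᵥ u = ∑ i, v i * u i * (d i)⁻¹ := by
  simp only [inv_diagonal_of_ne_zero hd, dotProduct, mulVec_diagonal, Pi.inv_apply]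
  exact Finset.sum_congr rfl fun i _ => by ring

theorem det_sub_vecMulVec {A : Matrix n n K} (hA : IsUnit A.det) (u v : n → K) :
    (A - vecMulVec u v).det = A.det * (1 - v ⬝ᵥ A⁻¹ *ᵥ u) := by
  rw [sub_eq_add_neg, ← neg_vecMulVec, vecMulVec_eq Unit,
    det_add_replicateCol_mul_replicateRow hA, det_unique (n := Unit), Matrix.mul_assoc,
    ← replicateCol_mulVec, add_apply, one_apply_eq, replicateRow_mul_replicateCol_apply,
    mulVec_neg, dotProduct_neg, sub_eq_add_neg]

theorem dotProduct_inv_sub_vecMulVec_mulVec {A : Matrix n n K} (hA : IsUnit A.det)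
    (u v : n → K) (hF : v ⬝ᵥ A⁻¹ *ᵥ u ≠ 1) :
    v ⬝ᵥ (A - vecMulVec u v)⁻¹ *ᵥ u = (v ⬝ᵥ A⁻¹ *ᵥ u) / (1 - v ⬝ᵥ A⁻¹ *ᵥ u) := by
  set F := v ⬝ᵥ A⁻¹ *ᵥ u
  have hF' : 1 - F ≠ 0 := sub_ne_zero.mpr hF.symm
  have hB : IsUnit (A - vecMulVec u v).det := by
    rw [det_sub_vecMulVec hA]
    exact hA.mul hF'.isUnit
  have hsolve : (A - vecMulVec u v) *ᵥ ((1 - F)⁻¹ • A⁻¹ *ᵥ u) = u := by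
    rw [mulVec_smul, sub_mulVec, mulVec_mulVec, mul_nonsing_inv A hA, one_mulVec,
      vecMulVec_mulVec, op_smul_eq_smul]
    ext i
    simp only [Pi.smul_apply, Pi.sub_apply, smul_eq_mul]
    field_simp
    ring
  have hinv : (A - vecMulVec u v)⁻¹ *ᵥ u = (1 - F)⁻¹ • A⁻¹ *ᵥ u := by
    conv_lhs => arg 2; rw [← hsolve]
    rw [mulVec_mulVec, nonsing_inv_mul _ hB, one_mulVec]
  rw [hinv, dotProduct_smul, smul_eq_mul, div_eq_inv_mul]

end Matrix

theorem Complex.im_sum_inv_ofReal_sub_ne_zero {ι : Type*} [Fintype ι] [Nonempty ι]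
    (a : ι → ℝ) {z : ℂ} (hz : z.im ≠ 0) : (∑ x, ((a x : ℂ) - z)⁻¹).im ≠ 0 := by
  have hterm : ∀ x, (((a x : ℂ) - z)⁻¹).im = z.im * (normSq ((a x : ℂ) - z))⁻¹ := by
    intro x
    simp [inv_im, div_eq_mul_inv]
  rw [im_sum, Finset.sum_congr rfl fun x _ => hterm x, ← Finset.mul_sum]
  refine mul_ne_zero hz (Finset.sum_pos (fun x _ => ?_) Finset.univ_nonempty).ne'
  refine inv_pos.mpr (normSq_pos.mpr fun h => hz ?_)
  simpa using congrArg im h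

theorem stmt_1_general (M : ℕ) (hM : 1 ≤ M) (V : Fin M → ℝ)
    (κ : ℝ)
    (φ₀ : Fin M → ℂ) (hφ₀ : ∀ x, φ₀ x = ((Real.sqrt M : ℝ) : ℂ)⁻¹)
    (H : Matrix (Fin M) (Fin M) ℂ)
    (hH : H = -(Matrix.vecMulVec φ₀ (star φ₀)) + κ • Matrix.diagonal (fun x => (V x : ℂ)))
    (z : ℂ) (hz : z.im ≠ 0) :
    (star φ₀) ⬝ᵥ ((H - z • (1 : Matrix (Fin M) (Fin M) ℂ))⁻¹ *ᵥ φ₀) =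
      (((1 / (M : ℂ)) * ∑ x, ((κ : ℂ) * V x - z)⁻¹)⁻¹ - 1)⁻¹ := by
  set d : Fin M → ℂ := fun x => (κ : ℂ) * V x - z
  have hd : ∀ x, d x ≠ 0 := fun x h => hz (by simpa [d] using congrArg Complex.im h)
  have hA : H - z • 1 = diagonal d - vecMulVec φ₀ (star φ₀) := by
    have hdiag : diagonal d = κ • diagonal (fun x => (V x : ℂ)) - z • 1 := by
      rw [smul_one_eq_diagonal, ← diagonal_smul, diagonal_sub]
      simp only [d, Pi.smul_apply, Complex.real_smul]
    rw [hH, hdiag]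
    abel
  have hφ₀sq : ∀ x, star (φ₀ x) * φ₀ x = 1 / (M : ℂ) := fun x => by
    rw [hφ₀, Complex.star_def, map_inv₀, Complex.conj_ofReal, ← mul_inv, ← Complex.ofReal_mul,
      Real.mul_self_sqrt (Nat.cast_nonneg M), one_div, Complex.ofReal_natCast]
  set F := (1 / (M : ℂ)) * ∑ x, (d x)⁻¹
  have hF : star φ₀ ⬝ᵥ (diagonal d)⁻¹ *ᵥ φ₀ = F := by
    simp only [dotProduct_inv_diagonal_mulVec hd, Pi.star_apply, hφ₀sq, F, Finset.mul_sum]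
  have hFim : F.im ≠ 0 := by
    have : Nonempty (Fin M) := ⟨⟨0, hM⟩⟩
    simpa [F, d, Nat.one_le_iff_ne_zero.mp hM] using Complex.im_sum_inv_ofReal_sub_ne_zero (fun x => κ * V x) hz
  have hF0 : F ≠ 0 := fun h => hFim (by rw [h, Complex.zero_im])
  have hF1 : F ≠ 1 := fun h => hFim (by rw [h, Complex.one_im])
  have hD : IsUnit (diagonal d).det := by
    rw [det_diagonal]
    exact (Finset.prod_ne_zero_iff.mpr fun x _ => hd x).isUnit
  rw [hA, dotProduct_inv_sub_vecMulVec_mulVec hD _ _ (hF ▸ hF1), hF]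
  field_simp

theorem stmt_1 (M : ℕ) (hM : 1 ≤ M) (V : Fin M → ℝ) (hV : Function.Injective V)
    (κ : ℝ) (hκ : 0 < κ)
    (φ₀ : Fin M → ℂ) (hφ₀ : ∀ x, φ₀ x = ((Real.sqrt M : ℝ) : ℂ)⁻¹)
    (H : Matrix (Fin M) (Fin M) ℂ)
    (hH : H = -(Matrix.vecMulVec φ₀ (star φ₀)) + κ • Matrix.diagonal (fun x => (V x : ℂ)))
    (z : ℂ) (hz : z.im ≠ 0) :
    (star φ₀) ⬝ᵥ ((H - z • (1 : Matrix (Fin M) (Fin M) ℂ))⁻¹ *ᵥ φ₀) =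
      (((1 / (M : ℂ)) * ∑ x, ((κ : ℂ) * V x - z)⁻¹)⁻¹ - 1)⁻¹ :=
  stmt_1_general M hM V κ φ₀ hφ₀ H hH z hz
end

section
/- Let F be a Herglotz–Pick function analytic on (-L, L) (representing measure supported in {|x| ≥ L}). Then for any W < L/10 and any u, u₀, u₁ ∈ [-W, W] with u ≠ u₀ and u₁ ≠ u₀: |(F(u) - F(u₀))/(u - u₀) - (F(u₁) - F(u₀))/(u₁ - u₀)| ≤ (6W/L) · (F(u₁) - F(u₀))/(u₁ - u₀). -/
/-!
Subtracting the representations of `F` at `u` and `u₀` gives the divided difference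
`(F u - F u₀) / (u - u₀) = a + ∫ dμ(x) / ((x - u) (x - u₀))`, whose kernel is positive because
`μ` lives on `|x| ≥ L`. Replacing `u` by `u₁` multiplies the kernel by
`(x - u₁) / (x - u) = 1 + (u - u₁) / (x - u)`, which lies within `2W / (L - W) ≤ 6W / L` of `1`;
as `a ≥ 0`, the resulting bound on the integrals also bounds the divided differences.
-/

open MeasureTheory Set

lemma ae_le_abs_of_measure_Ioo_eq_zero {μ : Measure ℝ} {L : ℝ} (h : μ (Ioo (-L) L) = 0) :
    ∀ᵐ x ∂μ, L ≤ |x| :=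
  measure_mono_null (fun x hx => by simpa [abs_lt] using hx) h

lemma mul_sub_pos_of_abs_lt {x u v : ℝ} (hu : |u| < |x|) (hv : |v| < |x|) :
    0 < (x - u) * (x - v) := by
  rw [abs_lt] at hu hv
  rcases le_or_gt 0 x with hx | hx
  · rw [abs_of_nonneg hx] at hu hv
    exact mul_pos (by linarith) (by linarith)
  · rw [abs_of_neg hx] at hu hv
    exact mul_pos_of_neg_of_neg (by linarith) (by linarith)

lemma sub_mul_abs_le_mul_abs_sub {x u L W : ℝ} (hu : |u| ≤ W) (hx : L ≤ |x|) (hWL : W ≤ L) :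
    (L - W) * |x| ≤ L * |x - u| := by
  have hW : 0 ≤ W := (abs_nonneg u).trans hu
  nlinarith [mul_le_mul_of_nonneg_left (abs_sub_abs_le_abs_sub x u) (hW.trans hWL),
    mul_nonneg hW (sub_nonneg.mpr hx)]

lemma sub_le_abs_sub {x u L W : ℝ} (hu : |u| ≤ W) (hx : L ≤ |x|) : L - W ≤ |x - u| := by
  linarith [abs_sub_abs_le_abs_sub x u]

lemma one_add_sq_mul_sq_le_mul_sub_mul_sub {x u v L W : ℝ} (hu : |u| ≤ W) (hv : |v| ≤ W) (hx : L ≤ |x|)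
    (hWL : W < L) : (1 + x ^ 2) * (L - W) ^ 2 ≤ (1 + L ^ 2) * ((x - u) * (x - v)) := by
  have hL : 0 < L := by linarith [abs_nonneg u]
  have hprod : (L - W) ^ 2 * x ^ 2 ≤ L ^ 2 * ((x - u) * (x - v)) := by
    rw [← abs_of_pos (mul_sub_pos_of_abs_lt (by linarith) (by linarith)), abs_mul, ← sq_abs x]
    calc (L - W) ^ 2 * |x| ^ 2 = ((L - W) * |x|) * ((L - W) * |x|) := by ring
      _ ≤ (L * |x - u|) * (L * |x - v|) :=
        mul_le_mul (sub_mul_abs_le_mul_abs_sub hu hx hWL.le)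
          (sub_mul_abs_le_mul_abs_sub hv hx hWL.le)
          (mul_nonneg (sub_nonneg.2 hWL.le) (abs_nonneg x)) (by positivity)
      _ = L ^ 2 * (|x - u| * |x - v|) := by ring
  have hx2 : L ^ 2 ≤ x ^ 2 := by rw [← sq_abs x]; gcongr
  refine le_of_mul_le_mul_left ?_ (by positivity : 0 < L ^ 2)
  nlinarith [sq_nonneg (L - W)]

lemma inv_sub_sub_inv_sub {K : Type*} [Field K] {x u v : K} (hu : x ≠ u) (hv : x ≠ v) :
    (x - u)⁻¹ - (x - v)⁻¹ = (u - v) * ((x - u) * (x - v))⁻¹ := by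
  rw [inv_sub_inv (sub_ne_zero.2 hu) (sub_ne_zero.2 hv), div_eq_mul_inv]
  ring

lemma abs_inv_mul_sub_sub_inv_mul_sub_le {x u u₀ u₁ L W : ℝ} (hx : L ≤ |x|) (hu : |u| ≤ W)
    (hu₀ : |u₀| ≤ W) (hu₁ : |u₁| ≤ W) (hWL : W < L) :
    |((x - u) * (x - u₀))⁻¹ - ((x - u₁) * (x - u₀))⁻¹| ≤
      2 * W / (L - W) * ((x - u₁) * (x - u₀))⁻¹ := by
  have hxu : L - W ≤ |x - u| := sub_le_abs_sub hu hx
  have hk : 0 < ((x - u₁) * (x - u₀))⁻¹ :=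
    inv_pos.2 (mul_sub_pos_of_abs_lt (by linarith) (by linarith))
  have hne : ∀ {v}, |v| ≤ W → x ≠ v := fun hv h => by subst h; linarith
  have hdiff : ((x - u) * (x - u₀))⁻¹ - ((x - u₁) * (x - u₀))⁻¹ =
      (u - u₁) / (x - u) * ((x - u₁) * (x - u₀))⁻¹ := by
    rw [mul_inv, mul_inv, ← sub_mul, inv_sub_sub_inv_sub (hne hu) (hne hu₁), mul_inv]
    ring
  have huu₁ : |u - u₁| ≤ 2 * W := (abs_sub _ _).trans (by linarith)
  rw [hdiff, abs_mul, abs_of_pos hk, abs_div]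
  gcongr
  linarith [abs_nonneg u]

section PickIntegral

variable {μ : Measure ℝ} {L : ℝ} (hμ : ∀ᵐ x ∂μ, L ≤ |x|)
include hμ

lemma integral_inv_mul_sub_nonneg {u v : ℝ} (hu : |u| < L) (hv : |v| < L) :
    0 ≤ ∫ x, ((x - u) * (x - v))⁻¹ ∂μ := by
  refine integral_nonneg_of_ae ?_
  filter_upwards [hμ] with x hx
  exact (inv_pos.2 (mul_sub_pos_of_abs_lt (hu.trans_le hx) (hv.trans_le hx))).le

variable (hint : Integrable (fun x => (1 + x ^ 2)⁻¹) μ)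
include hint

lemma integrable_inv_mul_sub {u v : ℝ} (hu : |u| < L) (hv : |v| < L) :
    Integrable (fun x => ((x - u) * (x - v))⁻¹) μ := by
  have hWL : max |u| |v| < L := max_lt hu hv
  refine (hint.const_mul ((1 + L ^ 2) / (L - max |u| |v|) ^ 2)).mono' (by fun_prop) ?_
  filter_upwards [hμ] with x hx
  have hpos := mul_sub_pos_of_abs_lt (hu.trans_le hx) (hv.trans_le hx)
  have hbound := one_add_sq_mul_sq_le_mul_sub_mul_sub (le_max_left |u| |v|) (le_max_right |u| |v|) hx hWL
  have hLW : 0 < L - max |u| |v| := sub_pos.mpr hWL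
  rw [Real.norm_eq_abs, abs_of_pos (inv_pos.mpr hpos)]
  field_simp
  rw [div_le_iff₀ hpos]
  linarith

lemma integrable_one_div_sub_sub {u : ℝ} (hu : |u| < L) :
    Integrable (fun x => 1 / (x - u) - x / (1 + x ^ 2)) μ := by
  have hL : 0 < L := (abs_nonneg u).trans_lt hu
  have h₀ : Integrable (fun x => x⁻¹ * (1 + x ^ 2)⁻¹) μ :=
    hint.bdd_mul (c := L⁻¹) (by fun_prop) <| by
      filter_upwards [hμ] with x hx
      rw [norm_inv, Real.norm_eq_abs]
      exact inv_anti₀ hL hx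
  -- `1 / (x - u) - x / (1 + x ^ 2) = 1 / (x (1 + x ^ 2)) + u / ((x - u) x)`
  refine (h₀.add ((integrable_inv_mul_sub hμ hint hu (v := 0) (by simpa)).const_mul u)).congr ?_
  filter_upwards [hμ] with x hx
  have hx₀ : x ≠ 0 := by rintro rfl; simp at hx; linarith
  have hxu : x - u ≠ 0 := sub_ne_zero.2 fun h => by rw [h] at hx; linarith
  simp only [Pi.add_apply, sub_zero]
  field_simp
  ring

lemma sub_div_sub_eq_add_integral {a b : ℝ} {F : ℝ → ℝ}
    (hF : ∀ z, F z = a * z + b + ∫ x, (1 / (x - z) - x / (1 + x ^ 2)) ∂μ) {u v : ℝ}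
    (hu : |u| < L) (hv : |v| < L) (huv : u ≠ v) :
    (F u - F v) / (u - v) = a + ∫ x, ((x - u) * (x - v))⁻¹ ∂μ := by
  have hne : ∀ {x w : ℝ}, L ≤ |x| → |w| < L → x ≠ w := fun hx hw h => by subst h; linarith
  have hI : (∫ x, (1 / (x - u) - x / (1 + x ^ 2)) ∂μ) - ∫ x, (1 / (x - v) - x / (1 + x ^ 2)) ∂μ =
      (u - v) * ∫ x, ((x - u) * (x - v))⁻¹ ∂μ := by
    rw [← integral_sub (integrable_one_div_sub_sub hμ hint hu)
      (integrable_one_div_sub_sub hμ hint hv), ← integral_const_mul]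
    refine integral_congr_ae ?_
    filter_upwards [hμ] with x hx
    rw [sub_sub_sub_cancel_right, one_div, one_div, inv_sub_sub_inv_sub (hne hx hu) (hne hx hv)]
  rw [div_eq_iff (sub_ne_zero.2 huv), hF u, hF v]
  linear_combination hI

lemma abs_integral_inv_mul_sub_sub_integral_le {W u u₀ u₁ : ℝ} (hu : |u| ≤ W) (hu₀ : |u₀| ≤ W)
    (hu₁ : |u₁| ≤ W) (hWL : W < L) :
    |(∫ x, ((x - u) * (x - u₀))⁻¹ ∂μ) - ∫ x, ((x - u₁) * (x - u₀))⁻¹ ∂μ| ≤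
      2 * W / (L - W) * ∫ x, ((x - u₁) * (x - u₀))⁻¹ ∂μ := by
  have hk₁ := integrable_inv_mul_sub hμ hint (hu₁.trans_lt hWL) (hu₀.trans_lt hWL)
  rw [← integral_sub (integrable_inv_mul_sub hμ hint (hu.trans_lt hWL) (hu₀.trans_lt hWL)) hk₁,
    ← integral_const_mul]
  refine abs_integral_le_integral_abs.trans (integral_mono_ae ?_ (hk₁.const_mul _) ?_)
  · exact ((integrable_inv_mul_sub hμ hint (hu.trans_lt hWL) (hu₀.trans_lt hWL)).sub hk₁).abs
  · filter_upwards [hμ] with x hx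
    exact abs_inv_mul_sub_sub_inv_mul_sub_le hx hu hu₀ hu₁ hWL

end PickIntegral

theorem stmt_4 (L W a b : ℝ) (hW : 0 < W) (hWL : W < L / 10) (ha : 0 ≤ a)
    (μ : Measure ℝ)
    (hsupp : μ (Set.Ioo (-L) L) = 0)
    (hint : Integrable (fun x => (1 + x ^ 2)⁻¹) μ)
    (F : ℝ → ℝ)
    (hF : ∀ z : ℝ, F z = a * z + b + ∫ x, (1 / (x - z) - x / (1 + x ^ 2)) ∂μ) :
    ∀ u ∈ Set.Icc (-W) W, ∀ u₀ ∈ Set.Icc (-W) W, ∀ u₁ ∈ Set.Icc (-W) W,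
      u ≠ u₀ → u₁ ≠ u₀ →
      |(F u - F u₀) / (u - u₀) - (F u₁ - F u₀) / (u₁ - u₀)| ≤
        (6 * W / L) * ((F u₁ - F u₀) / (u₁ - u₀)) := by
  intro u hu u₀ hu₀ u₁ hu₁ hne hne₁
  have hμ := ae_le_abs_of_measure_Ioo_eq_zero hsupp
  have hL : 0 < L := by linarith
  have hWL' : W < L := by linarith
  replace hu := abs_le.2 hu
  replace hu₀ := abs_le.2 hu₀
  replace hu₁ := abs_le.2 hu₁
  rw [sub_div_sub_eq_add_integral hμ hint hF (hu.trans_lt hWL') (hu₀.trans_lt hWL') hne,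
    sub_div_sub_eq_add_integral hμ hint hF (hu₁.trans_lt hWL') (hu₀.trans_lt hWL') hne₁,
    add_sub_add_left_eq_sub]
  have hI₁ := integral_inv_mul_sub_nonneg hμ (hu₁.trans_lt hWL') (hu₀.trans_lt hWL')
  have hconst : 2 * W / (L - W) ≤ 6 * W / L := by
    rw [div_le_div_iff₀ (by linarith) hL]
    nlinarith
  calc _ ≤ 2 * W / (L - W) * ∫ x, ((x - u₁) * (x - u₀))⁻¹ ∂μ :=
        abs_integral_inv_mul_sub_sub_integral_le hμ hint hu hu₀ hu₁ hWL'
    _ ≤ 6 * W / L * ∫ x, ((x - u₁) * (x - u₀))⁻¹ ∂μ := by gcongr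
    _ ≤ 6 * W / L * (a + ∫ x, ((x - u₁) * (x - u₀))⁻¹ ∂μ) := by gcongr; linarith
end

section
/- Let ρ(v) = (2π)^{-1/2} e^{-v²/2}. There exist constants 0 < c, C < ∞ such that for every 0 < δ ≤ 1 and every v ∈ ℝ: c/(1+|v|)² ≤ ∫_{|u-v| ≥ δ} ρ(u)/|u-v|² du ≤ C·(ρ(v)/δ + 1/(1+|v|)²). -/
/-!
For the lower bound, some unit interval inside `[-2, 2]` lies at distance between `1` and
`2 (1 + |v|)` from `v`; there the integrand is at least `ρ 2 / (4 (1 + |v|)²)`.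

For the upper bound, split at distance `r = (1 + |v|)⁻¹` from `v`. Within `r` one has
`v² - u² ≤ 2`, so `ρ u ≤ e ρ v`, and `∫_{|u - v| ≥ δ} (u - v)⁻² = 2 / δ`.
Beyond `r`, either `|u - v| ≥ (1 + |v|) / 2`, which contributes at most `4 / (1 + |v|)²`
because `∫ ρ = 1`, or `|u| > (|v| - 1) / 2`, where `ρ u ≤ exp ((2 - v²) / 16)`; against
`∫_{|u - v| ≥ r} (u - v)⁻² = 2 (1 + |v|)` this is `O((1 + |v|)⁻²)` by Gaussian decay.
-/

open MeasureTheory Set Filter Topology ProbabilityTheory Real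

lemma setOf_le_abs_sub_eq_union (v a : ℝ) :
    {u : ℝ | a ≤ |u - v|} = Iic (v - a) ∪ Ici (v + a) := by
  ext u
  simp only [mem_ofPred_eq, mem_union, mem_Iic, mem_Ici, le_abs]
  constructor <;> rintro (h | h) <;> first | (left; linarith) | (right; linarith)

lemma measurableSet_setOf_le_abs_sub (v a : ℝ) : MeasurableSet {u : ℝ | a ≤ |u - v|} :=
  measurableSet_le measurable_const (by fun_prop)

lemma integrableOn_inv_sq_sub (v : ℝ) {a : ℝ} (ha : 0 < a) :
    IntegrableOn (fun u : ℝ => ((u - v) ^ 2)⁻¹) {u | a ≤ |u - v|} := by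
  -- away from `v`, `(u - v)⁻²` is dominated by a multiple of the Cauchy kernel
  refine ((integrable_inv_one_add_sq.comp_sub_right v).const_mul
    (1 + (a ^ 2)⁻¹)).integrableOn.mono' (by fun_prop) ?_
  filter_upwards [ae_restrict_mem (measurableSet_setOf_le_abs_sub v a)] with u (hu : a ≤ |u - v|)
  have hsq : a ^ 2 ≤ (u - v) ^ 2 := by simpa only [sq_abs] using pow_le_pow_left₀ ha.le hu 2
  have hinv : ((u - v) ^ 2)⁻¹ ≤ (a ^ 2)⁻¹ := inv_anti₀ (by positivity) hsq
  rw [Real.norm_of_nonneg (by positivity), ← div_eq_mul_inv, le_div_iff₀ (by positivity),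
    mul_add, mul_one, inv_mul_cancel₀ ((pow_pos ha 2).trans_le hsq).ne']
  linarith

lemma hasDerivAt_neg_inv_sub {u v : ℝ} (h : u ≠ v) :
    HasDerivAt (fun x => -(x - v)⁻¹) ((u - v) ^ 2)⁻¹ u := by
  refine ((((hasDerivAt_id' u).sub_const v).inv (sub_ne_zero.2 h)).neg).congr_deriv ?_
  ring

lemma setIntegral_inv_sq_sub (v : ℝ) {a : ℝ} (ha : 0 < a) :
    ∫ u in {u | a ≤ |u - v|}, ((u - v) ^ 2)⁻¹ = 2 / a := by
  have hint := integrableOn_inv_sq_sub v ha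
  rw [setOf_le_abs_sub_eq_union] at hint ⊢
  have hdisj : Disjoint (Iic (v - a)) (Ici (v + a)) := Iic_disjoint_Ici.2 (by linarith)
  have hbot : Tendsto (fun x : ℝ => -(x - v)⁻¹) atBot (𝓝 0) := by
    simpa [sub_eq_add_neg] using
      (tendsto_atBot_add_const_right atBot (-v) tendsto_id).inv_tendsto_atBot.neg
  have htop : Tendsto (fun x : ℝ => -(x - v)⁻¹) atTop (𝓝 0) := by
    simpa [sub_eq_add_neg] using
      (tendsto_atTop_add_const_right atTop (-v) tendsto_id).inv_tendsto_atTop.neg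
  rw [setIntegral_union hdisj measurableSet_Ici hint.left_of_union hint.right_of_union,
    integral_Ici_eq_integral_Ioi,
    integral_Iic_of_hasDerivAt_of_tendsto'
      (fun x hx => hasDerivAt_neg_inv_sub (by linarith [mem_Iic.1 hx])) hint.left_of_union hbot,
    integral_Ioi_of_hasDerivAt_of_tendsto'
      (fun x hx => hasDerivAt_neg_inv_sub (by linarith [mem_Ici.1 hx]))
      (hint.right_of_union.mono_set Ioi_subset_Ici_self) htop]
  ring

section Kernel

variable {f : ℝ → ℝ} {v δ : ℝ}

lemma integrableOn_div_sq_abs_sub (hf : Integrable f) (hδ : 0 < δ) :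
    IntegrableOn (fun u => f u / |u - v| ^ 2) {u | δ ≤ |u - v|} := by
  have hmeas : AEStronglyMeasurable (fun u => f u / |u - v| ^ 2) :=
    (hf.aemeasurable.div (by fun_prop)).aestronglyMeasurable
  refine (hf.norm.const_mul (δ ^ 2)⁻¹).integrableOn.mono' hmeas.restrict ?_
  filter_upwards [ae_restrict_mem (measurableSet_setOf_le_abs_sub v δ)]
    with u (hu : δ ≤ |u - v|)
  rw [norm_div, Real.norm_of_nonneg (by positivity : (0 : ℝ) ≤ |u - v| ^ 2), inv_mul_eq_div]
  gcongr

lemma exists_Icc_abs_le_two_and_one_le_abs_sub (v : ℝ) :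
    ∃ a, ∀ u ∈ Icc a (a + 1), |u| ≤ 2 ∧ 1 ≤ |u - v| := by
  rcases le_total 0 v with hv | hv
  · refine ⟨-2, fun u ⟨h1, h2⟩ => ⟨abs_le.2 ⟨by linarith, by linarith⟩, ?_⟩⟩
    rw [abs_sub_comm]
    exact le_abs.2 (Or.inl (by linarith))
  · exact ⟨1, fun u ⟨h1, h2⟩ => ⟨abs_le.2 ⟨by linarith, by linarith⟩,
      le_abs.2 (Or.inl (by linarith))⟩⟩

lemma le_setIntegral_div_sq_abs_sub (hf0 : ∀ u, 0 ≤ f u) (hf : Integrable f) (hδ : 0 < δ)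
    (hδ1 : δ ≤ 1) {m : ℝ} (hm : ∀ u, |u| ≤ 2 → m ≤ f u) :
    m / 4 / (1 + |v|) ^ 2 ≤ ∫ u in {u | δ ≤ |u - v|}, f u / |u - v| ^ 2 := by
  obtain ⟨a, ha⟩ := exists_Icc_abs_le_two_and_one_le_abs_sub v
  have hsub : Icc a (a + 1) ⊆ {u | δ ≤ |u - v|} := fun u hu => hδ1.trans (ha u hu).2
  have hint := integrableOn_div_sq_abs_sub (v := v) hf hδ
  have hlow : ∀ u ∈ Icc a (a + 1), m / 4 / (1 + |v|) ^ 2 ≤ f u / |u - v| ^ 2 := by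
    intro u hu
    obtain ⟨hu2, hu1⟩ := ha u hu
    have hdist : |u - v| ≤ 2 * (1 + |v|) := by linarith [abs_sub u v, abs_nonneg v]
    calc m / 4 / (1 + |v|) ^ 2 = m / (2 * (1 + |v|)) ^ 2 := by field_simp; ring
      _ ≤ f u / |u - v| ^ 2 := div_le_div₀ (hf0 u) (hm u hu2) (by positivity) (by gcongr)
  calc m / 4 / (1 + |v|) ^ 2 = m / 4 / (1 + |v|) ^ 2 * volume.real (Icc a (a + 1)) := by simp
    _ ≤ ∫ u in Icc a (a + 1), f u / |u - v| ^ 2 :=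
      setIntegral_ge_of_const_le_real measurableSet_Icc (by simp) hlow (hint.mono_set hsub)
    _ ≤ ∫ u in {u | δ ≤ |u - v|}, f u / |u - v| ^ 2 :=
      setIntegral_mono_set hint (ae_of_all _ fun u => div_nonneg (hf0 u) (by positivity))
        (ae_of_all _ hsub)

lemma setIntegral_div_sq_abs_sub_le_of_le_on_ball (hf0 : ∀ u, 0 ≤ f u) (hf : Integrable f)
    {r R M : ℝ} (hr : 0 < r) (hR : 0 < R) (hM : ∀ u, |u - v| < R → f u ≤ M) :
    ∫ u in {u | r ≤ |u - v|}, f u / |u - v| ^ 2 ≤ (∫ u, f u) / R ^ 2 + 2 * M / r := by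
  have hM0 : 0 ≤ M := (hf0 v).trans (hM v (by simpa using hR))
  have hpoint : ∀ u ∈ {u | r ≤ |u - v|},
      f u / |u - v| ^ 2 ≤ f u / R ^ 2 + M * ((u - v) ^ 2)⁻¹ := by
    intro u (hu : r ≤ |u - v|)
    have hpos : 0 < |u - v| := hr.trans_le hu
    rw [← sq_abs (u - v)]
    rcases lt_or_ge |u - v| R with h | h
    · have : f u / |u - v| ^ 2 ≤ M * (|u - v| ^ 2)⁻¹ := by
        rw [div_eq_mul_inv]; gcongr; exact hM u h
      have : 0 ≤ f u / R ^ 2 := div_nonneg (hf0 u) (by positivity)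
      linarith
    · have : f u / |u - v| ^ 2 ≤ f u / R ^ 2 := by gcongr; exact hf0 u
      have : 0 ≤ M * (|u - v| ^ 2)⁻¹ := by positivity
      linarith
  have hfar := (hf.div_const (R ^ 2)).integrableOn (s := {u | r ≤ |u - v|})
  have hnear := (integrableOn_inv_sq_sub v hr).const_mul M
  calc ∫ u in {u | r ≤ |u - v|}, f u / |u - v| ^ 2
      ≤ ∫ u in {u | r ≤ |u - v|}, (f u / R ^ 2 + M * ((u - v) ^ 2)⁻¹) :=
        setIntegral_mono_on (integrableOn_div_sq_abs_sub hf hr) (hfar.add hnear)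
          (measurableSet_setOf_le_abs_sub v r) hpoint
    _ = (∫ u in {u | r ≤ |u - v|}, f u) / R ^ 2 + 2 * M / r := by
        rw [integral_add hfar hnear, integral_div, integral_const_mul, setIntegral_inv_sq_sub v hr]
        ring
    _ ≤ (∫ u, f u) / R ^ 2 + 2 * M / r := by
        have := setIntegral_le_integral (s := {u | r ≤ |u - v|}) hf (ae_of_all _ hf0)
        gcongr

lemma setIntegral_div_sq_abs_sub_le (hf0 : ∀ u, 0 ≤ f u) (hf : Integrable f) (hδ : 0 < δ)
    {r R K M : ℝ} (hr : 0 < r) (hR : 0 < R) (hK : ∀ u, |u - v| < r → f u ≤ K * f v)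
    (hM : ∀ u, |u - v| < R → f u ≤ M) :
    ∫ u in {u | δ ≤ |u - v|}, f u / |u - v| ^ 2 ≤
      2 * K * f v / δ + ((∫ u, f u) / R ^ 2 + 2 * M / r) := by
  set g := fun u => f u / |u - v| ^ 2
  have hKf : 0 ≤ K * f v := (hf0 v).trans (hK v (by simpa using hr))
  have hSr := measurableSet_setOf_le_abs_sub v r
  have hpoint : ∀ u ∈ {u | δ ≤ |u - v|},
      g u ≤ K * f v * ((u - v) ^ 2)⁻¹ + {u | r ≤ |u - v|}.indicator g u := by
    intro u (hu : δ ≤ |u - v|)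
    have hpos : 0 < |u - v| := hδ.trans_le hu
    by_cases h : r ≤ |u - v|
    · rw [indicator_of_mem (show u ∈ {u | r ≤ |u - v|} from h)]
      have : 0 ≤ K * f v * ((u - v) ^ 2)⁻¹ := by positivity
      linarith
    · rw [indicator_of_notMem (show u ∉ {u | r ≤ |u - v|} from h), add_zero, ← sq_abs]
      show f u / |u - v| ^ 2 ≤ _
      rw [div_eq_mul_inv]
      gcongr
      exact hK u (not_le.1 h)
  have hgr := integrableOn_div_sq_abs_sub (v := v) hf hr
  have hnear := (integrableOn_inv_sq_sub v hδ).const_mul (K * f v)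
  have hfar := (hgr.integrable_indicator hSr).integrableOn (s := {u | δ ≤ |u - v|})
  calc ∫ u in {u | δ ≤ |u - v|}, g u
      ≤ ∫ u in {u | δ ≤ |u - v|},
          (K * f v * ((u - v) ^ 2)⁻¹ + {u | r ≤ |u - v|}.indicator g u) :=
        setIntegral_mono_on (integrableOn_div_sq_abs_sub hf hδ) (hnear.add hfar)
          (measurableSet_setOf_le_abs_sub v δ) hpoint
    _ = 2 * K * f v / δ + ∫ u in {u | δ ≤ |u - v|} ∩ {u | r ≤ |u - v|}, g u := by
        rw [integral_add hnear hfar, integral_const_mul, setIntegral_inv_sq_sub v hδ,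
          setIntegral_indicator hSr]
        ring
    _ ≤ 2 * K * f v / δ + ∫ u in {u | r ≤ |u - v|}, g u :=
        add_le_add_right (setIntegral_mono_set hgr
          (ae_of_all _ fun u => div_nonneg (hf0 u) (by positivity))
          (ae_of_all _ inter_subset_right)) _
    _ ≤ 2 * K * f v / δ + ((∫ u, f u) / R ^ 2 + 2 * M / r) := by
        linarith [setIntegral_div_sq_abs_sub_le_of_le_on_ball hf0 hf hr hR hM]

end Kernel

lemma gaussianPDFReal_zero_one (x : ℝ) :
    gaussianPDFReal 0 1 x = (√(2 * π))⁻¹ * exp (-(x ^ 2) / 2) := by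
  simp [gaussianPDFReal]

lemma gaussianPDFReal_zero_one_le_of_abs_le {u w : ℝ} (h : |u| ≤ |w|) :
    gaussianPDFReal 0 1 w ≤ gaussianPDFReal 0 1 u := by
  simp only [gaussianPDFReal_zero_one, ← sq_abs u, ← sq_abs w]
  gcongr

lemma gaussianPDFReal_zero_one_le_exp_one_mul {u v : ℝ} (h : |u - v| < (1 + |v|)⁻¹) :
    gaussianPDFReal 0 1 u ≤ exp 1 * gaussianPDFReal 0 1 v := by
  have hv : 0 < 1 + |v| := by positivity
  have hdist_mul : |u - v| * (1 + |v|) ≤ 1 := by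
    rw [← le_div_iff₀ hv, one_div]; exact h.le
  have hdist_le_one : |u - v| ≤ 1 := by nlinarith [abs_nonneg (u - v), abs_nonneg v]
  have hprod : v ^ 2 - u ^ 2 ≤ |u - v| * |u + v| := by
    rw [← abs_mul]; linarith [neg_abs_le ((u - v) * (u + v))]
  have hsum : |u + v| ≤ |u - v| + 2 * |v| := by
    calc |u + v| = |(u - v) + 2 * v| := by ring_nf
      _ ≤ |u - v| + |2 * v| := abs_add_le _ _
      _ = |u - v| + 2 * |v| := by rw [abs_mul, abs_two]
  have hsq : v ^ 2 - u ^ 2 ≤ 2 := by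
    nlinarith [abs_nonneg (u - v), abs_nonneg v]
  simp only [gaussianPDFReal_zero_one]
  rw [mul_left_comm, ← exp_add]
  gcongr
  linarith

lemma gaussianPDFReal_zero_one_le_exp {u v : ℝ} (h : |u - v| < (1 + |v|) / 2) :
    gaussianPDFReal 0 1 u ≤ exp ((2 - v ^ 2) / 16) := by
  have hu : |v| < 2 * |u| + 1 := by linarith [abs_sub_abs_le_abs_sub v u, abs_sub_comm u v]
  have hsq : v ^ 2 ≤ 8 * u ^ 2 + 2 := by
    nlinarith [sq_abs u, sq_abs v, abs_nonneg u, abs_nonneg v, sq_nonneg (2 * |u| - 1)]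
  have hc : (√(2 * π))⁻¹ ≤ 1 :=
    inv_le_one_of_one_le₀ (one_le_sqrt.2 (by linarith [pi_gt_three]))
  rw [gaussianPDFReal_zero_one]
  calc (√(2 * π))⁻¹ * exp (-(u ^ 2) / 2) ≤ 1 * exp (-(u ^ 2) / 2) := by gcongr
    _ ≤ exp ((2 - v ^ 2) / 16) := by rw [one_mul]; exact exp_le_exp.2 (by linarith)

lemma one_add_abs_pow_three_mul_exp_le (v : ℝ) :
    (1 + |v|) ^ 3 * exp ((2 - v ^ 2) / 16) ≤ 2 ^ 19 := by
  set t := v ^ 2 / 16 with ht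
  have hexp : t ^ 3 / 6 ≤ exp t := by
    simpa [Nat.factorial] using pow_div_factorial_le_exp t (by positivity) 3
  have hpoly : (1 + |v|) ^ 3 ≤ 6 + 2 * |v| ^ 6 := by
    nlinarith [mul_nonneg (sq_nonneg (|v| - 1)) (by positivity : 0 ≤ |v| + 1),
      sq_nonneg (|v| ^ 3 - 1), abs_nonneg v]
  have hv6 : |v| ^ 6 = 4096 * t ^ 3 := by rw [ht, ← sq_abs v]; ring
  have h18 : exp (1 / 8) ≤ 3 :=
    (exp_le_exp.2 (by norm_num)).trans (exp_one_lt_d9.le.trans (by norm_num))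
  have hsplit : exp ((2 - v ^ 2) / 16) = exp (1 / 8) / exp t := by
    rw [← exp_sub, ht]; ring_nf
  rw [hsplit, ← mul_div_assoc, div_le_iff₀ (exp_pos t)]
  nlinarith [one_le_exp (by positivity : 0 ≤ t), exp_pos (1 / 8)]

theorem stmt_6 (ρ : ℝ → ℝ)
    (hρ : ∀ v : ℝ, ρ v = (Real.sqrt (2 * Real.pi))⁻¹ * Real.exp (-(v ^ 2) / 2)) :
    ∃ c C : ℝ, 0 < c ∧ 0 < C ∧
      ∀ δ v : ℝ, 0 < δ → δ ≤ 1 →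
        c / (1 + |v|) ^ 2 ≤ ∫ u in {u : ℝ | δ ≤ |u - v|}, ρ u / |u - v| ^ 2 ∧
        (∫ u in {u : ℝ | δ ≤ |u - v|}, ρ u / |u - v| ^ 2) ≤
          C * (ρ v / δ + 1 / (1 + |v|) ^ 2) := by
  obtain rfl : ρ = gaussianPDFReal 0 1 := funext fun v => by rw [hρ, gaussianPDFReal_zero_one]
  have hφ0 := gaussianPDFReal_nonneg 0 1
  have hφ := integrable_gaussianPDFReal 0 1
  refine ⟨gaussianPDFReal 0 1 2 / 4, 2 ^ 21,
    div_pos (gaussianPDFReal_pos 0 1 2 one_ne_zero) four_pos, by positivity,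
    fun δ v hδ hδ1 => ⟨?_, ?_⟩⟩
  · exact le_setIntegral_div_sq_abs_sub hφ0 hφ hδ hδ1 fun u hu =>
      gaussianPDFReal_zero_one_le_of_abs_le (by rwa [abs_two])
  have hv : 0 < 1 + |v| := by positivity
  calc _ ≤ 2 * exp 1 * gaussianPDFReal 0 1 v / δ +
        ((∫ u, gaussianPDFReal 0 1 u) / ((1 + |v|) / 2) ^ 2 +
          2 * exp ((2 - v ^ 2) / 16) / (1 + |v|)⁻¹) :=
        setIntegral_div_sq_abs_sub_le hφ0 hφ hδ (inv_pos.2 hv) (half_pos hv)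
          (fun _ => gaussianPDFReal_zero_one_le_exp_one_mul)
          (fun _ => gaussianPDFReal_zero_one_le_exp)
    _ ≤ 2 ^ 21 * (gaussianPDFReal 0 1 v / δ + 1 / (1 + |v|) ^ 2) := by
        rw [integral_gaussianPDFReal_eq_one 0 one_ne_zero]
        have hdecay := one_add_abs_pow_three_mul_exp_le v
        have hnear : 2 * exp 1 * gaussianPDFReal 0 1 v / δ ≤
            2 ^ 21 * (gaussianPDFReal 0 1 v / δ) := by
          rw [mul_div_assoc]
          gcongr
          · exact div_nonneg (hφ0 v) hδ.le
          · linarith [exp_one_lt_d9]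
        have hfar : 1 / ((1 + |v|) / 2) ^ 2 + 2 * exp ((2 - v ^ 2) / 16) / (1 + |v|)⁻¹ ≤
            2 ^ 21 * (1 / (1 + |v|) ^ 2) := by
          rw [div_inv_eq_mul, ← mul_div_assoc, le_div_iff₀ (by positivity)]
          field_simp
          nlinarith
        linarith
end
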